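/- arXiv:2111.06453 — 4 statements merged into one kernel-verified Lean document; each statement's English description precedes it below -/
import Mathlib

section
/- If OABC is a tangential quadrilateral (i.e., a+c = b+d where a,b,c,d are the consecutive side lengths OA, AB, BC, CO) and the diagonal OB divides OABC into two triangles of equal area, then OABC is a kite (i.e., a = d and b = c). -/
/-- Area of the triangle with vertices `P`, `Q`, `R` in the Euclidean plane. -/
noncomputable def triArea (P Q R : EuclideanSpace ℝ (Fin 2)) : ℝ :=
  |(Q 0 - P 0) * (R 1 - P 1) - (Q 1 - P 1) * (R 0 - P 0)| / 2

/-!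
Project onto the diagonal `OB`. With `u = B - O`, write `x P = ⟪u, P - O⟫` and
`y P = cross u (P - O)`; by Lagrange's identity `‖u‖ · OP = √(x P ^ 2 + y P ^ 2)` and
`‖u‖ · PB = √((x P - ‖u‖ ^ 2) ^ 2 + y P ^ 2)`. Equal areas give `|y A| = |y C|`, so with
`φ t = √(t ^ 2 + y A ^ 2)` the tangential condition reads
`φ (x A) - φ (x A - ‖u‖ ^ 2) = φ (x C) - φ (x C - ‖u‖ ^ 2)`. As `y A ≠ 0`, `φ` is strictly convex,
so `t ↦ φ t - φ (t - k)` is strictly increasing for `k > 0`; hence `x A = x C`, i.e. `A` and `C`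
are mirror images in the line `OB`.
-/

open Set RealInnerProductSpace

def cross (u v : EuclideanSpace ℝ (Fin 2)) : ℝ := u 0 * v 1 - u 1 * v 0

theorem triArea_eq_abs_cross (P Q R : EuclideanSpace ℝ (Fin 2)) :
    triArea P Q R = |cross (Q - P) (R - P)| / 2 := by
  simp [triArea, cross]

theorem cross_zero_left (v : EuclideanSpace ℝ (Fin 2)) : cross 0 v = 0 := by
  simp [cross]

theorem cross_swap (u v : EuclideanSpace ℝ (Fin 2)) : cross v u = -cross u v := by
  simp only [cross]; ring

theorem inner_sq_add_cross_sq (u v : EuclideanSpace ℝ (Fin 2)) :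
    ⟪u, v⟫ ^ 2 + cross u v ^ 2 = ‖u‖ ^ 2 * ‖v‖ ^ 2 := by
  simp only [EuclideanSpace.real_norm_sq_eq, PiLp.inner_apply, Fin.sum_univ_two, cross,
    RCLike.inner_apply, conj_trivial]
  ring

theorem norm_mul_norm_eq_sqrt (u v : EuclideanSpace ℝ (Fin 2)) :
    ‖u‖ * ‖v‖ = √(⟪u, v⟫ ^ 2 + cross u v ^ 2) := by
  rw [inner_sq_add_cross_sq, ← mul_pow, Real.sqrt_sq (by positivity)]

theorem dist_mul_dist_left (O B P : EuclideanSpace ℝ (Fin 2)) :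
    dist O B * dist O P = √(⟪B - O, P - O⟫ ^ 2 + cross (B - O) (P - O) ^ 2) := by
  rw [dist_comm O B, dist_comm O P, dist_eq_norm, dist_eq_norm, norm_mul_norm_eq_sqrt]

theorem dist_mul_dist_right (O B P : EuclideanSpace ℝ (Fin 2)) :
    dist O B * dist P B =
      √((⟪B - O, P - O⟫ - dist O B ^ 2) ^ 2 + cross (B - O) (P - O) ^ 2) := by
  have hinner : ⟪B - O, P - B⟫ = ⟪B - O, P - O⟫ - ‖B - O‖ ^ 2 := by
    rw [← real_inner_self_eq_norm_sq, ← inner_sub_right]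
    congr 1; abel
  have hcross : cross (B - O) (P - B) = cross (B - O) (P - O) := by
    simp only [cross, PiLp.sub_apply]; ring
  rw [dist_comm O B, dist_eq_norm, dist_eq_norm, norm_mul_norm_eq_sqrt, hinner, hcross]

theorem cross_ne_zero_of_not_collinear {O A B : EuclideanSpace ℝ (Fin 2)}
    (h : ¬ Collinear ℝ {O, A, B}) : cross (B - O) (A - O) ≠ 0 := by
  contrapose! h
  by_cases hOB : B = O
  · simpa [hOB, Set.insert_comm] using collinear_pair ℝ A O
  rw [Set.insert_comm]
  apply collinear_insert_of_mem_affineSpan_pair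
  have hu : ‖B - O‖ ^ 2 ≠ 0 := by simpa [sub_eq_zero] using hOB
  convert AffineMap.lineMap_mem_affineSpan_pair (⟪B - O, A - O⟫ / ‖B - O‖ ^ 2) O B
  rw [AffineMap.lineMap_apply]
  ext i
  fin_cases i <;>
    simp only [cross, Fin.isValue, PiLp.sub_apply, EuclideanSpace.real_norm_sq_eq, Fin.sum_univ_two,
      ne_eq, Fin.zero_eta, Fin.mk_one, PiLp.inner_apply, RCLike.inner_apply, Real.ringHom_apply,
      vsub_eq_sub, vadd_eq_add, PiLp.add_apply, PiLp.smul_apply, smul_eq_mul] at h hu ⊢ <;>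
    field_simp
  · linear_combination -(B 1 - O 1) * h
  · linear_combination (B 0 - O 0) * h

theorem strictConvexOn_sqrt_sq_add_sq {c : ℝ} (hc : c ≠ 0) :
    StrictConvexOn ℝ univ fun x : ℝ ↦ √(x ^ 2 + c ^ 2) := by
  refine ⟨convex_univ, fun x _ y _ hxy a b ha hb hab ↦ ?_⟩
  simp only [smul_eq_mul]
  set p := √(x ^ 2 + c ^ 2)
  set q := √(y ^ 2 + c ^ 2)
  have hp : p ^ 2 = x ^ 2 + c ^ 2 := Real.sq_sqrt (by positivity)
  have hq : q ^ 2 = y ^ 2 + c ^ 2 := Real.sq_sqrt (by positivity)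
  have hpq : p * q = √((x ^ 2 + c ^ 2) * (y ^ 2 + c ^ 2)) := (Real.sqrt_mul (by positivity) _).symm
  -- strict Cauchy–Schwarz for `(x, c)` and `(y, c)`: the defect is `c² (x - y)²`
  have hcs : x * y + c ^ 2 < p * q := by
    have hdefect : 0 < c ^ 2 * (x - y) ^ 2 := by have := sub_ne_zero.mpr hxy; positivity
    calc x * y + c ^ 2 ≤ |x * y + c ^ 2| := le_abs_self _
      _ < p * q := by
        rw [hpq, Real.lt_sqrt (abs_nonneg _), sq_abs]
        linear_combination hdefect
  have hp0 : 0 < p := Real.sqrt_pos.mpr (by positivity)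
  have hq0 : 0 < q := Real.sqrt_pos.mpr (by positivity)
  rw [Real.sqrt_lt' (by positivity)]
  have hb' : b = 1 - a := by linarith
  subst hb'
  nlinarith [mul_pos ha hb]

theorem StrictConvexOn.strictMono_sub_comp_sub {𝕜 : Type*} [Field 𝕜] [LinearOrder 𝕜]
    [IsStrictOrderedRing 𝕜] {f : 𝕜 → 𝕜} (hf : StrictConvexOn 𝕜 univ f) {k : 𝕜} (hk : 0 < k) :
    StrictMono fun x ↦ f x - f (x - k) := by
  intro s t hst
  have h₁ := hf.secant_strict_mono (mem_univ (s - k)) (mem_univ s) (mem_univ t)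
    (by linarith) (by linarith) hst
  have h₂ := hf.secant_strict_mono (mem_univ t) (mem_univ (s - k)) (mem_univ (t - k))
    (by linarith) (by linarith) (by linarith)
  have h₃ : (f s - f (s - k)) / k < (f t - f (t - k)) / k := by
    calc (f s - f (s - k)) / k = (f s - f (s - k)) / (s - (s - k)) := by ring_nf
      _ < (f t - f (s - k)) / (t - (s - k)) := h₁
      _ = (f (s - k) - f t) / (s - k - t) := by rw [← neg_div_neg_eq]; ring_nf
      _ < (f (t - k) - f t) / (t - k - t) := h₂
      _ = (f t - f (t - k)) / k := by rw [← neg_div_neg_eq]; ring_nf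
  simpa using (div_lt_div_iff_of_pos_right hk).mp h₃

/-- If `OABC` is a tangential quadrilateral (`a + c = b + d`) and the diagonal `OB`
divides it into two triangles of equal area, then `OABC` is a kite (`a = d` and `b = c`). -/
theorem stmt0 (O A B C : EuclideanSpace ℝ (Fin 2))
    (htang : dist O A + dist B C = dist A B + dist C O)
    (hndeg : ¬ Collinear ℝ ({O, A, B} : Set (EuclideanSpace ℝ (Fin 2))))
    (harea : triArea O A B = triArea O B C) :
    dist O A = dist C O ∧ dist A B = dist B C := by
  set x : EuclideanSpace ℝ (Fin 2) → ℝ := fun P ↦ ⟪B - O, P - O⟫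
  set y := cross (B - O) (A - O)
  have hy : y ≠ 0 := cross_ne_zero_of_not_collinear hndeg
  have hOB : 0 < dist O B := dist_pos.mpr fun h ↦ hy (by simp [y, h, cross_zero_left])
  have hyC : cross (B - O) (C - O) ^ 2 = y ^ 2 := by
    rw [triArea_eq_abs_cross, triArea_eq_abs_cross, cross_swap, abs_neg] at harea
    rw [← sq_abs, show |cross (B - O) (C - O)| = |y| by linarith, sq_abs]
  set φ : ℝ → ℝ := fun t ↦ √(t ^ 2 + y ^ 2)
  have hO (P) (hP : cross (B - O) (P - O) ^ 2 = y ^ 2) : dist O B * dist O P = φ (x P) := by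
    rw [dist_mul_dist_left, hP]
  have hB (P) (hP : cross (B - O) (P - O) ^ 2 = y ^ 2) :
      dist O B * dist P B = φ (x P - dist O B ^ 2) := by
    rw [dist_mul_dist_right, hP]
  rw [dist_comm B C, dist_comm C O] at htang ⊢
  have hφ : φ (x A) - φ (x A - dist O B ^ 2) = φ (x C) - φ (x C - dist O B ^ 2) := by
    linear_combination dist O B * htang - hO A rfl + hB A rfl + hO C hyC - hB C hyC
  have hx : x A = x C :=
    ((strictConvexOn_sqrt_sq_add_sq hy).strictMono_sub_comp_sub (pow_pos hOB 2)).injective hφ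
  constructor
  · apply mul_left_cancel₀ hOB.ne'
    rw [hO A rfl, hO C hyC, hx]
  · apply mul_left_cancel₀ hOB.ne'
    rw [hB A rfl, hB C hyC, hx]
end

section
/- A positive integer k has the lattice preservation property (for every lattice point X ∈ ℤ² such that the vector X/k has integer length, X/k is itself a lattice point) if and only if k has no prime factor congruent to 1 modulo 4. -/
/-- A positive integer `k` is a lattice preserver if for every lattice point `(x, y)`
such that `(x, y)/k` has integer length, `(x, y)/k` is itself a lattice point. -/
def LatticePreserver (k : ℕ) : Prop :=
  ∀ x y : ℤ, (∃ m : ℤ, x ^ 2 + y ^ 2 = (k : ℤ) ^ 2 * m ^ 2) → ((k : ℤ) ∣ x ∧ (k : ℤ) ∣ y)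

lemma prime3_dvd {p : ℕ} (hp : p.Prime) (hp3 : p % 4 = 3) {x y : ℤ}
    (h : (p : ℤ) ∣ x ^ 2 + y ^ 2) : (p : ℤ) ∣ x ∧ (p : ℤ) ∣ y := by
  haveI : Fact p.Prime := ⟨hp⟩
  have hns : ¬ IsSquare (-1 : ZMod p) := by
    rw [ZMod.exists_sq_eq_neg_one_iff]; simp [hp3]
  have key : ∀ a b : ZMod p, a ^ 2 + b ^ 2 = 0 → a = 0 := by
    intro a b hab
    by_contra ha
    apply hns
    refine ⟨b * a⁻¹, ?_⟩
    have h1 : a ^ 2 ≠ 0 := pow_ne_zero _ ha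
    field_simp
    ring_nf
    ring_nf at hab
    linear_combination -hab
  have hz : ((x : ZMod p)) ^ 2 + (y : ZMod p) ^ 2 = 0 := by
    have := (ZMod.intCast_zmod_eq_zero_iff_dvd _ p).2 h
    push_cast at this
    exact this
  constructor
  · exact (ZMod.intCast_zmod_eq_zero_iff_dvd _ p).1 (key _ _ hz)
  · exact (ZMod.intCast_zmod_eq_zero_iff_dvd _ p).1
      (key _ _ (by rw [add_comm] at hz; exact hz))

lemma four_dvd {x y : ℤ} (h : (4 : ℤ) ∣ x ^ 2 + y ^ 2) : (2 : ℤ) ∣ x ∧ (2 : ℤ) ∣ y := by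
  have key : ∀ a b : ZMod 4, a ^ 2 + b ^ 2 = 0 → a = 0 ∨ a = 2 := by decide
  have hz : ((x : ZMod 4)) ^ 2 + (y : ZMod 4) ^ 2 = 0 := by
    have := (ZMod.intCast_zmod_eq_zero_iff_dvd _ 4).2 h
    push_cast at this
    exact this
  have two_of : ∀ z : ℤ, ((z : ZMod 4) = 0 ∨ (z : ZMod 4) = 2) → (2 : ℤ) ∣ z := by
    intro z hz4
    rcases hz4 with h0 | h2
    · have := (ZMod.intCast_zmod_eq_zero_iff_dvd _ 4).1 h0
      exact dvd_trans (by norm_num) this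
    · have : ((z - 2 : ℤ) : ZMod 4) = 0 := by push_cast; rw [h2]; ring
      have := (ZMod.intCast_zmod_eq_zero_iff_dvd _ 4).1 this
      have h2' : (2 : ℤ) ∣ z - 2 := dvd_trans (by norm_num) this
      omega
  exact ⟨two_of x (key _ _ hz), two_of y (key _ _ (by rw [add_comm] at hz; exact hz))⟩

lemma key_dir : ∀ k : ℕ, (∀ p : ℕ, p.Prime → p ∣ k → p % 4 ≠ 1) →
    ∀ x y : ℤ, ((k : ℤ)) ^ 2 ∣ x ^ 2 + y ^ 2 → ((k : ℤ) ∣ x ∧ (k : ℤ) ∣ y) := by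
  intro k
  induction k using Nat.strong_induction_on with
  | _ k ih =>
    intro hfac x y hdvd
    rcases Nat.eq_zero_or_pos k with rfl | hk
    · simp only [Nat.cast_zero] at *
      have hx2 : x ^ 2 + y ^ 2 = 0 := by simpa using hdvd
      have hx : x = 0 ∧ y = 0 := by
        constructor <;> nlinarith [sq_nonneg x, sq_nonneg y]
      simp [hx.1, hx.2]
    rcases Nat.lt_or_ge k 2 with hk1 | hk2
    · interval_cases k <;> simp
    -- k ≥ 2, take min prime factor
    obtain ⟨p, hpdef⟩ : ∃ p, p = k.minFac := ⟨_, rfl⟩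
    have hp : p.Prime := hpdef ▸ Nat.minFac_prime (by omega)
    have hpk : p ∣ k := hpdef ▸ Nat.minFac_dvd k
    have hp1 : p % 4 ≠ 1 := hfac p hp hpk
    obtain ⟨t, ht⟩ := hpk
    have ht0 : 0 < t := by
      rcases Nat.eq_zero_or_pos t with rfl | h
      · omega
      · exact h
    have ht_lt : t < k := by
      have h2p : 2 ≤ p := hp.two_le
      have := Nat.mul_le_mul_right t h2p
      omega
    have htfac : ∀ q : ℕ, q.Prime → q ∣ t → q % 4 ≠ 1 := fun q hq hqt =>
      hfac q hq (hqt.trans ⟨p, by rw [ht]; ring⟩)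
    have hcase : p = 2 ∨ p % 4 = 3 := by
      rcases hp.eq_two_or_odd' with h2 | hodd
      · left; exact h2
      · right
        have := Nat.odd_iff.1 hodd
        omega
    have step : (p : ℤ) ∣ x ∧ (p : ℤ) ∣ y := by
      rcases hcase with h2 | hp3
      · rw [h2]
        apply four_dvd
        refine dvd_trans ?_ hdvd
        have h4 : (4 : ℤ) = (2 : ℤ) ^ 2 := by norm_num
        rw [h4]
        refine pow_dvd_pow_of_dvd ?_ 2
        have h2k : (2:ℕ) ∣ k := by rw [← h2]; exact ⟨t, ht⟩
        exact_mod_cast Int.natCast_dvd_natCast.2 h2k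
      · apply prime3_dvd hp hp3
        refine dvd_trans ?_ hdvd
        calc (p : ℤ) ∣ (p : ℤ) ^ 2 := dvd_pow_self _ (by norm_num)
          _ ∣ (k : ℤ) ^ 2 := by
            refine pow_dvd_pow_of_dvd ?_ 2
            have hpk2 : p ∣ k := ⟨t, ht⟩
            exact_mod_cast Int.natCast_dvd_natCast.2 hpk2
    obtain ⟨x', rfl⟩ := step.1
    obtain ⟨y', rfl⟩ := step.2
    have hdvd' : ((t : ℤ)) ^ 2 ∣ x' ^ 2 + y' ^ 2 := by
      obtain ⟨m, hm⟩ := hdvd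
      refine ⟨m, ?_⟩
      have hp0 : (0 : ℤ) < (p : ℤ) := by exact_mod_cast hp.pos
      have hkpt : (k : ℤ) = (p : ℤ) * t := by exact_mod_cast ht
      rw [hkpt] at hm
      nlinarith [hm, hp0]
    have hrec := ih t ht_lt htfac x' y' hdvd'
    constructor
    · rw [ht]; push_cast; exact mul_dvd_mul_left _ hrec.1
    · rw [ht]; push_cast; exact mul_dvd_mul_left _ hrec.2

/-- A positive integer `k` is a lattice preserver if and only if `k` has no prime factor
congruent to `1` modulo `4`. -/
theorem stmt5 (k : ℕ) (hk : 0 < k) :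
    LatticePreserver k ↔ ∀ p : ℕ, p.Prime → p ∣ k → p % 4 ≠ 1 := by
  constructor
  · intro hLP p hp hpk hp1
    haveI : Fact p.Prime := ⟨hp⟩
    obtain ⟨a, b, hab⟩ := Nat.Prime.sq_add_sq (p := p) (by omega)
    obtain ⟨t, ht⟩ := hpk
    have ht0 : 0 < t := by
      rcases Nat.eq_zero_or_pos t with rfl | h; · simp at ht; omega
      exact h
    set x : ℤ := t * ((a : ℤ) ^ 2 - (b : ℤ) ^ 2) with hxdef
    set y : ℤ := 2 * a * b * t with hydef
    have hsum : x ^ 2 + y ^ 2 = (k : ℤ) ^ 2 * 1 ^ 2 := by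
      have : ((a : ℤ) ^ 2 + (b : ℤ) ^ 2) = (p : ℤ) := by exact_mod_cast hab
      rw [hxdef, hydef, ht]
      push_cast
      linear_combination ((t:ℤ)^2 * ((a:ℤ)^2 + (b:ℤ)^2 + (p:ℤ))) * this
    obtain ⟨hx, _⟩ := hLP x y ⟨1, hsum⟩
    rw [ht, hxdef] at hx
    push_cast at hx
    have hpdvd : (p : ℤ) ∣ (a : ℤ) ^ 2 - (b : ℤ) ^ 2 := by
      rcases hx with ⟨c, hc⟩
      refine ⟨c, ?_⟩
      have ht0' : (0 : ℤ) < (t : ℤ) := by exact_mod_cast ht0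
      have : (t : ℤ) * ((a:ℤ)^2 - (b:ℤ)^2) = (t : ℤ) * ((p : ℤ) * c) := by
        linear_combination hc
      exact mul_left_cancel₀ (ne_of_gt ht0') this
    have hpdvd2 : (p : ℤ) ∣ 2 * (a : ℤ) ^ 2 := by
      have hP : ((a : ℤ) ^ 2 + (b : ℤ) ^ 2) = (p : ℤ) := by exact_mod_cast hab
      have : (p : ℤ) ∣ ((a:ℤ)^2 + (b:ℤ)^2) + ((a:ℤ)^2 - (b:ℤ)^2) :=
        dvd_add (hP ▸ dvd_refl _) hpdvd
      convert this using 1; ring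
    have hpodd : ¬ (p : ℤ) ∣ 2 := by
      intro h
      have h1 : (p:ℤ) ≤ 2 := Int.le_of_dvd (by norm_num) h
      have h2 : p ≤ 2 := by exact_mod_cast h1
      have := hp.two_le
      omega
    have hpa : (p : ℤ) ∣ (a : ℤ) := by
      have := (Int.Prime.dvd_mul' hp hpdvd2).resolve_left hpodd
      exact Int.Prime.dvd_pow' hp this
    have hpa' : p ∣ a := by exact_mod_cast hpa
    have hab' : a ^ 2 + b ^ 2 = p := hab
    rcases Nat.eq_zero_or_pos a with rfl | ha0
    · simp at hab'
      have hb : b * b = p := by nlinarith [hab']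
      rcases hp.eq_one_or_self_of_dvd b ⟨b, hb.symm⟩ with h1 | h1 <;>
        nlinarith [hp.two_le]
    · have : p ≤ a := Nat.le_of_dvd ha0 hpa'
      nlinarith [hab', hp.two_le]
  · intro hfac x y ⟨m, hm⟩
    exact key_dir k hfac x y ⟨m ^ 2, hm⟩
end

section
/- Let y, z, k ∈ ℕ with k > 16 and k > yz. Suppose Σ := 8(z² + k)/(k − 16) is an integer, Σ' := y²Σ/k is an integer, and x := √(k(Σ + Σ')/8) is an integer. If moreover Σ'/Σ = u/v in lowest terms with u odd and v even with even 2-adic order, then (Σ, Σ') = (40, 10). -/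
/-!
Coprimality of `u` and `v` gives `k = vt`, `Σ = vs`, `Σ' = us` and `y² = ut`; the 2-adic
hypothesis gives `v = 4V` with `V` of even 2-adic order, and comparing 2-adic orders in
`2x² = s·t·V·(u + 4V)` forces `s = 2r`. With `z = 2w` the equation for `Σ` becomes
`w² + Vt + 4rV = rV²t`, and `yz < k` becomes `uw² < 4V²t`. Together they give
`urVt < 4Vt + ut + 4ur`, hence (once the few cases `Vt ≤ 7` are excluded) `urV < 8V + 2u` and
`r ≤ 9`. As `u`, `V` and `u + 4V` are pairwise coprime and `urV(u + 4V)` is a square, the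
remaining cases are killed by parity, congruences modulo 3, 9 and 27, the fact that `4β² + 1`
is never a square, and inspection of finitely many values; only `u = V = 1`, `r = 5`, that is
`(Σ, Σ') = (40, 10)`, survives.
-/
namespace Nat

lemma isSquare_of_isSquare_mul_self_mul {c n : ℕ} (hc : c ≠ 0) (h : IsSquare (c * c * n)) :
    IsSquare n := by
  obtain ⟨m, hm⟩ := h
  obtain ⟨w, rfl⟩ : c ∣ m := (Nat.pow_dvd_pow_iff two_ne_zero).1 ⟨n, by rw [sq, sq, ← hm]⟩
  exact ⟨w, Nat.eq_of_mul_eq_mul_left (show 0 < c * c by positivity) (by rw [hm]; ring)⟩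

lemma Coprime.isSquare_of_isSquare_mul {m n : ℕ} (h : m.Coprime n) (hmn : IsSquare (m * n)) :
    IsSquare m ∧ IsSquare n := by
  obtain ⟨c, hc⟩ := hmn
  obtain ⟨a, ha⟩ := exists_eq_pow_of_mul_eq_pow (Nat.isUnit_iff.2 h) (hc.trans (sq c).symm)
  obtain ⟨b, hb⟩ := exists_eq_pow_of_mul_eq_pow (Nat.isUnit_iff.2 h.symm)
    ((mul_comm n m).trans (hc.trans (sq c).symm))
  exact ⟨⟨a, ha.trans (sq a)⟩, ⟨b, hb.trans (sq b)⟩⟩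

lemma Prime.dvd_of_isSquare_mul {p u : ℕ} (hp : p.Prime) (h : IsSquare (u * p)) : p ∣ u := by
  obtain ⟨m, hm⟩ := h
  obtain ⟨w, rfl⟩ : p ∣ m := (hp.dvd_mul.1 ⟨u, by rw [← hm, mul_comm]⟩).elim id id
  exact ⟨w * w, Nat.eq_of_mul_eq_mul_right hp.pos (by rw [hm]; ring)⟩

lemma Coprime.exists_eq_mul_of_mul_eq_mul {u v a b : ℕ} (huv : u.Coprime v) (hv : v ≠ 0)
    (h : a * v = b * u) : ∃ s, b = v * s ∧ a = u * s := by
  obtain ⟨s, rfl⟩ : v ∣ b := huv.symm.dvd_of_dvd_mul_right ⟨a, by rw [← h, mul_comm]⟩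
  exact ⟨s, rfl, Nat.eq_of_mul_eq_mul_right (Nat.pos_of_ne_zero hv) (by rw [h]; ring)⟩

lemma not_isSquare_sq_add {m a : ℕ} (ha : 0 < a) (h : a < 2 * m + 1) :
    ¬ IsSquare (m ^ 2 + a) := by
  rintro ⟨c, hc⟩
  exact Nat.not_exists_sq (m := m) (by nlinarith) (by nlinarith) ⟨c, hc.symm⟩

lemma sq_mod_three_ne_two (z : ℕ) : z ^ 2 % 3 ≠ 2 := by
  rw [Nat.pow_mod]
  have := Nat.mod_lt z three_pos
  interval_cases z % 3 <;> decide

lemma even_padicValNat_of_isSquare {p n : ℕ} [Fact p.Prime] (h : IsSquare n) :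
    Even (padicValNat p n) := by
  obtain ⟨m, rfl⟩ := h
  rcases eq_or_ne m 0 with rfl | hm
  · simp
  · rw [padicValNat.mul hm hm]
    exact ⟨_, rfl⟩

lemma even_padicValNat_of_isSquare_mul {p a b : ℕ} [Fact p.Prime] (ha : a ≠ 0) (hb : b ≠ 0)
    (h : IsSquare (a * b)) (hb' : Even (padicValNat p b)) : Even (padicValNat p a) := by
  have := even_padicValNat_of_isSquare (p := p) h
  rw [padicValNat.mul ha hb] at this
  exact (Nat.even_add.1 this).2 hb'

lemma mod_four_ne_two_of_even_padicValNat {n : ℕ} (h : Even (padicValNat 2 n)) : n % 4 ≠ 2 := by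
  intro h4
  obtain ⟨m, rfl⟩ : ∃ m, n = 2 * (2 * m + 1) := ⟨n / 4, by omega⟩
  rw [padicValNat.mul two_ne_zero (by omega), padicValNat.self one_lt_two,
    padicValNat.eq_zero_of_not_dvd (by omega)] at h
  exact Nat.not_even_one h

lemma exists_eq_four_mul_of_even_padicValNat {v : ℕ} (hv0 : v ≠ 0) (hv : Even v)
    (hval : Even (padicValNat 2 v)) : ∃ V, v = 4 * V ∧ Even (padicValNat 2 V) := by
  obtain ⟨V, rfl⟩ : 4 ∣ v := by
    have := mod_four_ne_two_of_even_padicValNat hval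
    obtain ⟨j, rfl⟩ := hv
    omega
  refine ⟨V, rfl, ?_⟩
  rw [padicValNat.mul (by norm_num) (by omega), show (4 : ℕ) = 2 ^ 2 by norm_num,
    padicValNat.prime_pow] at hval
  exact (Nat.even_add.1 hval).1 even_two

lemma two_dvd_of_two_mul_sq_eq_mul {x s m : ℕ} (hm0 : m ≠ 0) (hm : Even (padicValNat 2 m))
    (h : 2 * x ^ 2 = s * m) : 2 ∣ s := by
  rcases eq_or_ne s 0 with rfl | hs
  · exact dvd_zero 2
  have hx : x ≠ 0 := by
    rintro rfl
    simp [hs, hm0] at h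
  have hval := congrArg (padicValNat 2) h
  rw [padicValNat.mul two_ne_zero (by positivity), padicValNat.self one_lt_two, padicValNat.pow,
    padicValNat.mul hs hm0] at hval
  obtain ⟨j, hj⟩ := hm
  exact dvd_of_one_le_padicValNat (by omega)

lemma sq_ne_three_mul_one_add_four_mul_sq (m b : ℕ) : m ^ 2 ≠ 3 * (1 + 4 * b ^ 2) := by
  have key : ∀ x y : ZMod 9, x ^ 2 ≠ 3 * (1 + 4 * y ^ 2) := by decide
  exact fun h ↦ key m b (by exact_mod_cast congrArg (Nat.cast : ℕ → ZMod 9) h)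

lemma sq_add_three_mul_sq_add_thirty_six_ne (q c n : ℕ) : q ^ 2 + 3 * c ^ 2 + 36 ≠ 27 * n := by
  have key : ∀ x y : ZMod 27, x ^ 2 + 3 * y ^ 2 + 36 ≠ 0 := by decide
  intro h
  refine key q c ?_
  have := congrArg (Nat.cast : ℕ → ZMod 27) h
  push_cast at this
  rw [this, show (27 : ZMod 27) = 0 from rfl, zero_mul]

lemma even_padicValNat_two_of_isSquare_mul {u t : ℕ} (hu : Odd u) (ht : t ≠ 0)
    (h : IsSquare (u * t)) : Even (padicValNat 2 t) :=
  even_padicValNat_of_isSquare_mul ht hu.pos.ne' (mul_comm u t ▸ h)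
    (by rw [padicValNat.eq_zero_of_not_dvd (by obtain ⟨j, rfl⟩ := hu; omega)]; exact ⟨0, rfl⟩)

lemma even_padicValNat_two_mul_mul_add_four_mul {u t V : ℕ} (hu : Odd u) (ht : t ≠ 0)
    (hV : V ≠ 0) (htval : Even (padicValNat 2 t)) (hVval : Even (padicValNat 2 V)) :
    Even (padicValNat 2 (t * V * (u + 4 * V))) := by
  have hN : padicValNat 2 (u + 4 * V) = 0 :=
    padicValNat.eq_zero_of_not_dvd (by obtain ⟨j, rfl⟩ := hu; omega)
  rw [padicValNat.mul (by positivity) (by omega), padicValNat.mul ht hV, hN, add_zero]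
  exact htval.add hVval

end Nat

/-- The data of the theorem after the substitutions `v = 4V`, `k = 4Vt`, `Σ = 8Vr`, `Σ' = 2ur`,
`z = 2w`, `y² = ut` and `x² = rtV(u + 4V)`. -/
structure ReducedSolution (u V t r w : ℕ) : Prop where
  odd_u : Odd u
  coprime : u.Coprime V
  even_padicValNat_V : Even (padicValNat 2 V)
  pos_w : 0 < w
  eq : w ^ 2 + V * t + 4 * r * V = r * V ^ 2 * t
  lt : u * w ^ 2 < 4 * V ^ 2 * t
  isSquare_ut : IsSquare (u * t)
  isSquare_rtVN : IsSquare (r * t * V * (u + 4 * V))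

lemma exists_half_of_sigma_eq {V t r z : ℕ} (hk : 16 < 4 * V * t)
    (hS : 4 * V * (2 * r) * (4 * V * t - 16) = 8 * (z ^ 2 + 4 * V * t)) :
    ∃ w, z = 2 * w ∧ w ^ 2 + V * t + 4 * r * V = r * V ^ 2 * t := by
  have hS4 : z ^ 2 + 4 * (V * t + 4 * r * V) = 4 * (r * V ^ 2 * t) := by
    zify [hk.le] at hS
    have : (8 : ℤ) * (z ^ 2 + 4 * (V * t + 4 * r * V)) = 8 * (4 * (r * V ^ 2 * t)) := by
      linear_combination -hS
    exact_mod_cast mul_left_cancel₀ (by norm_num) this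
  obtain ⟨w, rfl⟩ : 2 ∣ z := by
    rw [← Nat.pow_dvd_pow_iff two_ne_zero]
    exact (Nat.dvd_add_left (dvd_mul_right 4 _)).mp ⟨_, hS4⟩
  exact ⟨w, rfl, Nat.eq_of_mul_eq_mul_left (show 0 < 4 by norm_num) (by linarith)⟩

theorem exists_reducedSolution {y z k S S' x u v : ℕ} (hz : 0 < z) (hk : 16 < k)
    (hkyz : y * z < k) (hS : S * (k - 16) = 8 * (z ^ 2 + k)) (hS' : S' * k = y ^ 2 * S)
    (hx : 8 * x ^ 2 = k * (S + S')) (hgcd : Nat.gcd u v = 1) (hratio : S' * v = S * u)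
    (hu : Odd u) (hveven : Even v) (hval : Even (padicValNat 2 v)) :
    ∃ V t r w, ReducedSolution u V t r w ∧ S = 8 * V * r ∧ S' = 2 * u * r := by
  have hS0 : S ≠ 0 := by
    rintro rfl
    simp at hS
    omega
  have hv0 : v ≠ 0 := by
    rintro rfl
    simp only [Nat.gcd_zero_right] at hgcd
    simp [hgcd] at hratio
    exact hS0 hratio.symm
  obtain ⟨s, rfl, rfl⟩ := Nat.Coprime.exists_eq_mul_of_mul_eq_mul hgcd hv0 hratio
  have hs0 : s ≠ 0 := by rintro rfl; simp at hS0
  obtain ⟨t, rfl, hyt⟩ := Nat.Coprime.exists_eq_mul_of_mul_eq_mul hgcd hv0 (a := y ^ 2) (b := k)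
    (Nat.eq_of_mul_eq_mul_left (Nat.pos_of_ne_zero hs0) (by
      calc s * (y ^ 2 * v) = y ^ 2 * (v * s) := by ring
        _ = u * s * k := hS'.symm
        _ = s * (k * u) := by ring))
  obtain ⟨V, rfl, hV⟩ := Nat.exists_eq_four_mul_of_even_padicValNat hv0 hveven hval
  have ht0 : t ≠ 0 := by rintro rfl; simp at hk
  have hV0 : V ≠ 0 := by rintro rfl; simp at hv0
  have hut : IsSquare (u * t) := ⟨y, by rw [← hyt, sq]⟩
  have hx' : 2 * x ^ 2 = s * (t * V * (u + 4 * V)) :=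
    Nat.eq_of_mul_eq_mul_left (show 0 < 4 by norm_num) (by
      calc 4 * (2 * x ^ 2) = 8 * x ^ 2 := by ring
        _ = 4 * V * t * (4 * V * s + u * s) := hx
        _ = 4 * (s * (t * V * (u + 4 * V))) := by ring)
  obtain ⟨r, rfl⟩ := Nat.two_dvd_of_two_mul_sq_eq_mul (by positivity)
    (Nat.even_padicValNat_two_mul_mul_add_four_mul hu ht0 hV0
      (Nat.even_padicValNat_two_of_isSquare_mul hu ht0 hut) hV) hx'
  obtain ⟨w, rfl, heq⟩ := exists_half_of_sigma_eq hk hS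
  refine ⟨V, t, r, w,
    ⟨hu, Nat.Coprime.coprime_mul_left_right hgcd, hV, by omega, heq, ?_, hut, ?_⟩, by ring, by ring⟩
  · refine Nat.lt_of_mul_lt_mul_left (a := 4 * t) ?_
    calc 4 * t * (u * w ^ 2) = (y * (2 * w)) ^ 2 := by rw [mul_pow, hyt]; ring
      _ < (4 * V * t) ^ 2 := Nat.pow_lt_pow_left hkyz two_ne_zero
      _ = 4 * t * (4 * V ^ 2 * t) := by ring
  · exact ⟨x, by linarith⟩

namespace ReducedSolution

variable {u V t r w : ℕ}

lemma pos (h : ReducedSolution u V t r w) : 0 < V ∧ 0 < t ∧ 0 < r := by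
  have hw := h.pos_w
  have heq := h.eq
  refine ⟨Nat.pos_of_ne_zero ?_, Nat.pos_of_ne_zero ?_, Nat.pos_of_ne_zero ?_⟩ <;>
    rintro rfl <;> simp at heq <;> omega

lemma four_lt_mul (h : ReducedSolution u V t r w) : 4 < V * t := by
  by_contra! hle
  have := Nat.mul_le_mul_left (r * V) hle
  nlinarith [h.eq, h.pos_w]

lemma even_padicValNat_t (h : ReducedSolution u V t r w) : Even (padicValNat 2 t) :=
  Nat.even_padicValNat_two_of_isSquare_mul h.odd_u h.pos.2.1.ne' h.isSquare_ut

lemma even_padicValNat_r (h : ReducedSolution u V t r w) : Even (padicValNat 2 r) := by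
  obtain ⟨hV, ht, hr⟩ := h.pos
  refine Nat.even_padicValNat_of_isSquare_mul hr.ne' (by positivity) ?_
    (Nat.even_padicValNat_two_mul_mul_add_four_mul h.odd_u ht.ne' hV.ne' h.even_padicValNat_t
      h.even_padicValNat_V)
  simpa only [mul_assoc] using h.isSquare_rtVN

lemma isSquare_urVN (h : ReducedSolution u V t r w) : IsSquare (u * r * V * (u + 4 * V)) := by
  refine Nat.isSquare_of_isSquare_mul_self_mul h.pos.2.1.ne' ?_
  have := h.isSquare_ut.mul h.isSquare_rtVN
  rwa [show u * t * (r * t * V * (u + 4 * V)) = t * t * (u * r * V * (u + 4 * V)) by ring]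
    at this

lemma urVt_lt (h : ReducedSolution u V t r w) :
    u * r * V * t < 4 * V * t + u * t + 4 * u * r := by
  refine Nat.lt_of_mul_lt_mul_left (a := V) ?_
  have e := congrArg (u * ·) h.eq
  nlinarith [h.lt]

lemma mul_ne_five (h : ReducedSolution u V t r w) : V * t ≠ 5 := by
  intro hK
  have hr := Nat.mod_four_ne_two_of_even_padicValNat h.even_padicValNat_r
  have heq := h.eq
  rw [show r * V ^ 2 * t = r * V * (V * t) by ring, hK] at heq
  have hrV : w ^ 2 + 5 = r * V := by linarith
  have hw := h.pos_w
  have hlt := h.lt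
  have hV5 : V ≤ 5 := Nat.le_of_dvd (by norm_num) ⟨t, hK.symm⟩
  -- Both surviving cases `(V, t) = (1, 5)` and `(5, 1)` force `r = 6`, of odd 2-adic order.
  interval_cases V <;> try omega
  · obtain rfl : t = 5 := by omega
    have h5 : 5 ≤ u :=
      Nat.le_of_dvd h.odd_u.pos (Nat.prime_five.dvd_of_isSquare_mul h.isSquare_ut)
    obtain rfl : w = 1 := by nlinarith
    omega
  · obtain rfl : t = 1 := by omega
    have hw10 : w < 10 := by nlinarith [h.odd_u.pos]
    interval_cases w <;> omega

lemma mul_ne_six (h : ReducedSolution u V t r w) : V * t ≠ 6 := by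
  intro hK
  have hV := Nat.mod_four_ne_two_of_even_padicValNat h.even_padicValNat_V
  have ht := Nat.mod_four_ne_two_of_even_padicValNat h.even_padicValNat_t
  have hV6 : V ≤ 6 := Nat.le_of_dvd (by norm_num) ⟨t, hK.symm⟩
  interval_cases V <;> omega

lemma mul_ne_seven (h : ReducedSolution u V t r w) : V * t ≠ 7 := by
  intro hK
  have heq := h.eq
  rw [show r * V ^ 2 * t = r * V * (V * t) by ring, hK] at heq
  have h3 : w ^ 2 + 7 = 3 * (r * V) := by linarith
  have := Nat.sq_mod_three_ne_two w
  omega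

lemma eight_le_mul (h : ReducedSolution u V t r w) : 8 ≤ V * t := by
  have := h.four_lt_mul
  have := h.mul_ne_five
  have := h.mul_ne_six
  have := h.mul_ne_seven
  omega

lemma urV_lt (h : ReducedSolution u V t r w) : u * r * V < 8 * V + 2 * u := by
  refine Nat.lt_of_mul_lt_mul_right (a := t) ?_
  nlinarith [Nat.mul_le_mul_left (u * r) h.eight_le_mul, h.urVt_lt]

lemma r_le_nine (h : ReducedSolution u V t r w) : r ≤ 9 := by
  by_contra! hr
  nlinarith [Nat.mul_le_mul_left (u * V) hr, h.urV_lt, h.odd_u.pos, h.pos.1]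

lemma coprime_add_four_mul (h : ReducedSolution u V t r w) :
    u.Coprime (u + 4 * V) ∧ V.Coprime (u + 4 * V) :=
  ⟨Nat.coprime_self_add_right.2
      (((Nat.coprime_two_right.2 h.odd_u).pow_right 2).mul_right h.coprime),
    (Nat.coprime_add_mul_right_right V u 4).2 h.coprime.symm⟩

lemma not_isSquare_uVN (h : ReducedSolution u V t r w) : ¬ IsSquare (u * V * (u + 4 * V)) := by
  intro hsq
  obtain ⟨hcu, hcV⟩ := h.coprime_add_four_mul
  obtain ⟨⟨μ, rfl⟩, hVN⟩ :=
    (h.coprime.mul_right hcu).isSquare_of_isSquare_mul (by rwa [← mul_assoc])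
  obtain ⟨⟨β, rfl⟩, hN⟩ := hcV.isSquare_of_isSquare_mul hVN
  have hβ : 0 < β := Nat.pos_of_mul_pos_left h.pos.1
  obtain rfl | hμ : μ = 1 ∨ 3 ≤ μ := by
    obtain ⟨j, hj⟩ := (Nat.odd_mul.1 h.odd_u).1
    omega
  · exact Nat.not_isSquare_sq_add (m := 2 * β) one_pos (by omega)
      (by rwa [show (2 * β) ^ 2 + 1 = 1 * 1 + 4 * (β * β) by ring])
  obtain rfl | hβ2 : β = 1 ∨ 2 ≤ β := by omega
  · exact Nat.not_isSquare_sq_add (m := μ) (a := 4) (by norm_num) (by omega)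
      (by rwa [show μ ^ 2 + 4 = μ * μ + 4 * (1 * 1) by ring])
  have hB := h.urV_lt
  have hr := h.pos.2.2
  have hX : μ * μ * (β * β) < 8 * (β * β) + 2 * (μ * μ) :=
    lt_of_le_of_lt (Nat.mul_le_mul_right _ (Nat.le_mul_of_pos_right _ hr)) hB
  obtain rfl : μ = 3 := by
    by_contra hμ3
    have h16 : 4 * 4 ≤ μ * μ := Nat.mul_le_mul (by omega) (by omega)
    have h4 : 2 * 2 ≤ β * β := Nat.mul_le_mul hβ2 hβ2
    nlinarith
  obtain rfl : r = 1 := by nlinarith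
  have hβ4 : β ≤ 4 := by nlinarith
  interval_cases β
  · have heq := h.eq
    have : w ^ 2 + 16 = 3 * (4 * t) := by linarith
    have := Nat.sq_mod_three_ne_two w
    omega
  · exact absurd h.coprime (by norm_num)
  · exact absurd hN (by norm_num)

lemma r_ne_three (h : ReducedSolution u V t r w) (hu : u = 1) : r ≠ 3 := by
  rintro rfl
  subst hu
  have hsq : IsSquare (3 * V * (1 + 4 * V)) := by simpa using h.isSquare_urVN
  have hcN : V.Coprime (1 + 4 * V) := h.coprime_add_four_mul.2
  -- If `3 ∣ V` then `V = 3p²`, and dividing the main equation by `p²` leaves an equation that is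
  -- impossible modulo 27; otherwise `V` and `3(1 + 4V)` are squares, which is impossible modulo 9.
  by_cases h3 : 3 ∣ V
  · have h3N : Nat.Coprime 3 (1 + 4 * V) :=
      (Nat.Prime.coprime_iff_not_dvd Nat.prime_three).2 (by omega)
    obtain ⟨m, hm⟩ := ((h3N.mul_left hcN).isSquare_of_isSquare_mul hsq).1
    obtain ⟨p, rfl⟩ : 3 ∣ m := (Nat.prime_three.dvd_mul.1 ⟨V, hm.symm⟩).elim id id
    obtain rfl : V = 3 * p ^ 2 := by linarith
    obtain ⟨c, hc⟩ := h.isSquare_ut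
    have heq := h.eq
    rw [one_mul] at hc
    subst hc
    obtain ⟨q, rfl⟩ : p ∣ w := by
      rw [← Nat.pow_dvd_pow_iff two_ne_zero]
      have hdvd : p ^ 2 ∣ w ^ 2 + p ^ 2 * (3 * (c * c) + 36) := ⟨27 * p ^ 2 * c ^ 2, by linarith⟩
      exact (Nat.dvd_add_left (dvd_mul_right _ _)).mp hdvd
    have hp : 0 < p ^ 2 := by have := h.pos.1; omega
    refine Nat.sq_add_three_mul_sq_add_thirty_six_ne q c (p ^ 2 * c ^ 2)
      (Nat.eq_of_mul_eq_mul_left hp ?_)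
    linarith
  · have hV3 : V.Coprime (3 * (1 + 4 * V)) :=
      (((Nat.Prime.coprime_iff_not_dvd Nat.prime_three).2 h3).symm).mul_right hcN
    obtain ⟨⟨β, rfl⟩, ⟨m, hm⟩⟩ := hV3.isSquare_of_isSquare_mul (by convert hsq using 1; ring)
    exact Nat.sq_ne_three_mul_one_add_four_mul_sq m β (by rw [sq, sq, ← hm])

lemma u_eq_one (h : ReducedSolution u V t r w) (hr : 3 ≤ r) : u = 1 := by
  by_contra hu1
  have hu3 : 3 ≤ u := by obtain ⟨j, rfl⟩ := h.odd_u; omega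
  have hB : u * V * r < 8 * V + 2 * u := by simpa only [mul_right_comm] using h.urV_lt
  have hV := h.pos.1
  have h3V : 3 * V ≤ u * V := Nat.mul_le_mul_right V hu3
  have huV : u ≤ u * V := Nat.le_mul_of_pos_right u hV
  have hr4 : r ≤ 4 := by
    by_contra! hr5
    nlinarith [Nat.mul_le_mul_left (u * V) hr5]
  have hBr : u * V * 3 < 8 * V + 2 * u := lt_of_le_of_lt (Nat.mul_le_mul_left _ hr) hB
  have hu7 : u ≤ 7 := by
    by_contra! hu8
    nlinarith [Nat.mul_le_mul_right V hu8]
  have hV5 : V ≤ 5 := by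
    by_contra! hV6
    nlinarith [Nat.mul_le_mul_left u hV6]
  have hsq := h.isSquare_urVN
  obtain rfl | rfl | rfl : u = 3 ∨ u = 5 ∨ u = 7 := by obtain ⟨j, rfl⟩ := h.odd_u; omega
  all_goals interval_cases r <;> interval_cases V <;> first | omega | norm_num at hsq

lemma V_le_twenty (h : ReducedSolution u V t r w) (hu : u = 1) (hr : 5 ≤ r) : V ≤ 20 := by
  subst hu
  have hlt := h.urVt_lt
  have ht := h.pos.2.1
  by_contra! hV
  have hVt : 21 * t ≤ V * t := Nat.mul_le_mul_right t hV
  nlinarith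

lemma V_eq_one_and_r_eq_five (h : ReducedSolution u V t r w) (hu : u = 1) (hr : 5 ≤ r) :
    V = 1 ∧ r = 5 := by
  have hV20 := h.V_le_twenty hu hr
  have hr9 := h.r_le_nine
  have hVm := Nat.mod_four_ne_two_of_even_padicValNat h.even_padicValNat_V
  have hsq := h.isSquare_urVN
  have hV := h.pos.1
  subst hu
  obtain ⟨rfl | rfl, rfl⟩ : (V = 1 ∨ V = 20) ∧ r = 5 := by
    interval_cases r <;> interval_cases V <;> first | omega | norm_num at hsq
  · exact ⟨rfl, rfl⟩
  · have hlt := h.urVt_lt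
    obtain rfl : t = 1 := by have := h.pos.2.1; omega
    have heq := h.eq
    exact absurd ⟨w, by nlinarith⟩ (by norm_num : ¬ IsSquare 1580)

theorem u_eq_one_and_V_eq_one_and_r_eq_five (h : ReducedSolution u V t r w) :
    u = 1 ∧ V = 1 ∧ r = 5 := by
  have hr9 := h.r_le_nine
  have hr2 := Nat.mod_four_ne_two_of_even_padicValNat h.even_padicValNat_r
  have hr1 : r ≠ 1 := by
    rintro rfl
    exact h.not_isSquare_uVN (by simpa using h.isSquare_urVN)
  have hr4 : r ≠ 4 := by
    rintro rfl
    refine h.not_isSquare_uVN (Nat.isSquare_of_isSquare_mul_self_mul two_ne_zero ?_)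
    rw [show 2 * 2 * (u * V * (u + 4 * V)) = u * 4 * V * (u + 4 * V) by ring]
    exact h.isSquare_urVN
  have hr0 := h.pos.2.2
  have hu := h.u_eq_one (by omega)
  have hr3 := h.r_ne_three hu
  exact ⟨hu, h.V_eq_one_and_r_eq_five hu (by omega)⟩

end ReducedSolution

theorem stmt12_general (y z k S S' x u v : ℕ)
    (hz : 0 < z) (hk : 16 < k) (hkyz : y * z < k)
    (hS : S * (k - 16) = 8 * (z ^ 2 + k))
    (hS' : S' * k = y ^ 2 * S)
    (hx : 8 * x ^ 2 = k * (S + S'))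
    (hgcd : Nat.gcd u v = 1)
    (hratio : S' * v = S * u)
    (huodd : Odd u) (hveven : Even v) (hval : Even (padicValNat 2 v)) :
    S = 40 ∧ S' = 10 := by
  obtain ⟨V, t, r, w, h, rfl, rfl⟩ :=
    exists_reducedSolution hz hk hkyz hS hS' hx hgcd hratio huodd hveven hval
  obtain ⟨rfl, rfl, rfl⟩ := h.u_eq_one_and_V_eq_one_and_r_eq_five
  norm_num

/-- Case 1 of the number-theoretic theorem: with `k > 16`, `k > yz`,
`Σ = 8(z² + k)/(k - 16)` an integer, `Σ' = y²Σ/k` an integer,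
`x = √(k(Σ + Σ')/8)` an integer, and `Σ'/Σ = u/v` in lowest terms with `u` odd and
`v` even of even 2-adic order, then `(Σ, Σ') = (40, 10)`. -/
theorem stmt12 (y z k S S' x u v : ℕ)
    (hy : 0 < y) (hz : 0 < z) (hk : 16 < k) (hkyz : y * z < k)
    (hS : S * (k - 16) = 8 * (z ^ 2 + k))
    (hS' : S' * k = y ^ 2 * S)
    (hx : 8 * x ^ 2 = k * (S + S'))
    (hu : 0 < u) (hv : 0 < v) (hgcd : Nat.gcd u v = 1)
    (hratio : S' * v = S * u)
    (huodd : Odd u) (hveven : Even v) (hval : Even (padicValNat 2 v)) :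
    S = 40 ∧ S' = 10 :=
  stmt12_general y z k S S' x u v hz hk hkyz hS hS' hx hgcd hratio huodd hveven hval
end

section
/- If m, n, Y, Z are integers satisfying m² = 2n² − 1 and (m² − 8)Y² = 1 + 8Z², then: m, n, Y are odd; 3 divides Y but 3 divides neither m, n, nor Z; 7 divides m; and every prime divisor of m² − 8 is congruent to 1 modulo 8. -/
/-!
Everything except the last claim is a congruence computation: reducing both equations modulo
`2`, `4`, `3` and `7` leaves finitely many residue patterns, and only those with the stated
divisibilities survive. For a prime `p ∣ m² − 8`, which is odd because `m` is, `m² ≡ 8` makes `2`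
a square mod `p`, so `p ≡ ±1 (mod 8)`, while `1 + 8Z² ≡ 0` gives `(4Z)² ≡ −2`, so
`p ≡ 1, 3 (mod 8)`.
-/

def IsSolution {R : Type*} [CommRing R] (m n Y Z : R) : Prop :=
  m ^ 2 = 2 * n ^ 2 - 1 ∧ (m ^ 2 - 8) * Y ^ 2 = 1 + 8 * Z ^ 2

namespace IsSolution

section CommRing

variable {R S : Type*} [CommRing R] [CommRing S] {m n Y Z : R}

theorem map (h : IsSolution m n Y Z) (f : R →+* S) : IsSolution (f m) (f n) (f Y) (f Z) := by
  obtain ⟨h1, h2⟩ := h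
  constructor
  · simpa [map_ofNat] using congrArg f h1
  · simpa [map_ofNat] using congrArg f h2

theorem isSquare_neg_two_of_sq_eq_eight (h : IsSolution m n Y Z) (hm : m ^ 2 = 8) :
    IsSquare (-2 : R) := by
  have hZ : 1 + 8 * Z ^ 2 = 0 := by rw [← h.2, hm, sub_self, zero_mul]
  exact ⟨4 * Z, by linear_combination -2 * hZ⟩

end CommRing

theorem zmod_three {m n Y Z : ZMod 3} (h : IsSolution m n Y Z) :
    m ≠ 0 ∧ n ≠ 0 ∧ Y = 0 ∧ Z ≠ 0 := by
  revert m n Y Z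
  unfold IsSolution
  decide

theorem zmod_seven {m n Y Z : ZMod 7} (h : IsSolution m n Y Z) : m = 0 := by
  revert m n Y Z
  unfold IsSolution
  decide

variable {m n Y Z : ℤ}

theorem odd (h : IsSolution m n Y Z) : Odd m ∧ Odd n ∧ Odd Y := by
  obtain ⟨h1, h2⟩ := h
  have hm : Odd m := (Int.odd_pow' two_ne_zero).1 (h1 ▸ ⟨n ^ 2 - 1, by ring⟩)
  have hn : Odd n := by
    rw [← Int.not_even_iff_odd]
    rintro ⟨k, rfl⟩
    have := Int.sq_mod_four_eq_one_of_odd hm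
    ring_nf at h1
    omega
  have hmY : Odd ((m ^ 2 - 8) * Y ^ 2) := h2 ▸ ⟨4 * Z ^ 2, by ring⟩
  exact ⟨hm, hn, (Int.odd_pow' two_ne_zero).1 (Int.odd_mul.1 hmY).2⟩

theorem mod_three (h : IsSolution m n Y Z) : ¬ 3 ∣ m ∧ ¬ 3 ∣ n ∧ 3 ∣ Y ∧ ¬ 3 ∣ Z := by
  have := (h.map (Int.castRingHom (ZMod 3))).zmod_three
  simpa [ZMod.intCast_zmod_eq_zero_iff_dvd] using this

theorem seven_dvd (h : IsSolution m n Y Z) : 7 ∣ m := by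
  have := (h.map (Int.castRingHom (ZMod 7))).zmod_seven
  simpa [ZMod.intCast_zmod_eq_zero_iff_dvd] using this

theorem mod_eight_eq_one_of_prime_dvd (h : IsSolution m n Y Z) {p : ℕ} (hp : p.Prime)
    (hpm : (p : ℤ) ∣ m ^ 2 - 8) : p % 8 = 1 := by
  have := Fact.mk hp
  have hp2 : p ≠ 2 := by
    rintro rfl
    have hodd : Odd (m ^ 2 - 8) := h.odd.1.pow.sub_even ⟨4, rfl⟩
    exact (Int.not_even_iff_odd.2 hodd) (even_iff_two_dvd.2 (by exact_mod_cast hpm))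
  have hm8 : (m : ZMod p) ^ 2 = 8 := by
    rw [← sub_eq_zero]
    exact_mod_cast (ZMod.intCast_zmod_eq_zero_iff_dvd _ p).2 hpm
  have h2 : (2 : ZMod p) ≠ 0 := by
    exact Ring.two_ne_zero (by rwa [ZMod.ringChar_zmod_n])
  have hsq2 : IsSquare (2 : ZMod p) := ⟨m / 2, by field_simp; linear_combination -hm8⟩
  have hsqn2 : IsSquare (-2 : ZMod p) :=
    (h.map (Int.castRingHom (ZMod p))).isSquare_neg_two_of_sq_eq_eight hm8
  have := (ZMod.exists_sq_eq_two_iff hp2).1 hsq2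
  have := (ZMod.exists_sq_eq_neg_two_iff hp2).1 hsqn2
  omega

end IsSolution

/-- If integers `m, n, Y, Z` satisfy `m² = 2n² - 1` and `(m² - 8)Y² = 1 + 8Z²`, then
`m`, `n`, `Y` are odd; `3 ∣ Y` but `3` divides none of `m`, `n`, `Z`; `7 ∣ m`; and
every prime divisor of `m² - 8` is congruent to `1` mod `8`. -/
theorem stmt14 (m n Y Z : ℤ)
    (h1 : m ^ 2 = 2 * n ^ 2 - 1)
    (h2 : (m ^ 2 - 8) * Y ^ 2 = 1 + 8 * Z ^ 2) :
    Odd m ∧ Odd n ∧ Odd Y ∧ (3 ∣ Y) ∧ ¬ ((3 : ℤ) ∣ m) ∧ ¬ ((3 : ℤ) ∣ n) ∧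
    ¬ ((3 : ℤ) ∣ Z) ∧ ((7 : ℤ) ∣ m) ∧
    ∀ p : ℕ, p.Prime → (p : ℤ) ∣ m ^ 2 - 8 → p % 8 = 1 := by
  have h : IsSolution m n Y Z := ⟨h1, h2⟩
  obtain ⟨hm, hn, hY⟩ := h.odd
  obtain ⟨hm3, hn3, hY3, hZ3⟩ := h.mod_three
  exact ⟨hm, hn, hY, hY3, hm3, hn3, hZ3, h.seven_dvd, fun p hp => h.mod_eight_eq_one_of_prime_dvd hp⟩
end
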